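/- arXiv:1602.01200 — 5 statements merged into one kernel-verified Lean document; each statement's English description precedes it below -/
import Mathlib

section
/- Let d₁ = 1/2 + √7/10 − √2/10, d₂ = 1/2 − √7/10 − √2/10, ω₁ = 1/2 + √14/84, ω₂ = 1/2 − √14/84. Then the four equations 4d₁ω₁(1−d₁)³ + 4d₂ω₂(1−d₂)³ = 1/5, 6d₁²ω₁(1−d₁)² + 6d₂²ω₂(1−d₂)² = 1/5, 4d₁³ω₁(1−d₁) + 4d₂³ω₂(1−d₂) = 1/5, and ω₁d₁⁴ + ω₂d₂⁴ + ω₁(1−d₁)⁴ + ω₂(1−d₂)⁴ = 2/5 all hold. -/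
open Real
theorem asymptotic_system_quartic_c0 :
    let d1 : ℝ := 1/2 + Real.sqrt 7 / 10 - Real.sqrt 2 / 10
    let d2 : ℝ := 1/2 - Real.sqrt 7 / 10 - Real.sqrt 2 / 10
    let ω1 : ℝ := 1/2 + Real.sqrt 14 / 84
    let ω2 : ℝ := 1/2 - Real.sqrt 14 / 84
    4 * d1 * ω1 * (1 - d1)^3 + 4 * d2 * ω2 * (1 - d2)^3 = 1/5 ∧
    6 * d1^2 * ω1 * (1 - d1)^2 + 6 * d2^2 * ω2 * (1 - d2)^2 = 1/5 ∧
    4 * d1^3 * ω1 * (1 - d1) + 4 * d2^3 * ω2 * (1 - d2) = 1/5 ∧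
    ω1 * d1^4 + ω2 * d2^4 + ω1 * (1 - d1)^4 + ω2 * (1 - d2)^4 = 2/5 := by
  have h7 : Real.sqrt 7 ^ 2 = 7 := Real.sq_sqrt (by norm_num)
  have h2 : Real.sqrt 2 ^ 2 = 2 := Real.sq_sqrt (by norm_num)
  have hm : Real.sqrt 14 = Real.sqrt 7 * Real.sqrt 2 := by
    rw [← Real.sqrt_mul (by norm_num)]; norm_num
  intro d1 d2 ω1 ω2
  refine ⟨?_, ?_, ?_, ?_⟩ <;> simp only [d1, d2, ω1, ω2, hm]
  · linear_combination ((-7/2500 : ℝ) + (-12/875) * Real.sqrt 2 + (-4/1875) * Real.sqrt 2 ^ 2 + (1/3500) * Real.sqrt 2 ^ 3 + (1/26250) * Real.sqrt 2 ^ 4 + (-1/2500) * Real.sqrt 7 ^ 2 + (1/10500) * Real.sqrt 7 ^ 2 * Real.sqrt 2 + (1/26250) * Real.sqrt 7 ^ 2 * Real.sqrt 2 ^ 2) * h7 + ((-19/1250 : ℝ) + (-1/500) * Real.sqrt 2 + (-1/7500) * Real.sqrt 2 ^ 2) * h2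
  · linear_combination ((-129/5000 : ℝ) + (81/17500) * Real.sqrt 2 ^ 2 + (-1/17500) * Real.sqrt 2 ^ 4 + (3/5000) * Real.sqrt 7 ^ 2 + (-1/17500) * Real.sqrt 7 ^ 2 * Real.sqrt 2 ^ 2) * h7 + ((7/2500 : ℝ) + (1/5000) * Real.sqrt 2 ^ 2) * h2
  · linear_combination ((-7/2500 : ℝ) + (12/875) * Real.sqrt 2 + (-4/1875) * Real.sqrt 2 ^ 2 + (-1/3500) * Real.sqrt 2 ^ 3 + (1/26250) * Real.sqrt 2 ^ 4 + (-1/2500) * Real.sqrt 7 ^ 2 + (-1/10500) * Real.sqrt 7 ^ 2 * Real.sqrt 2 + (1/26250) * Real.sqrt 7 ^ 2 * Real.sqrt 2 ^ 2) * h7 + ((-19/1250 : ℝ) + (1/500) * Real.sqrt 2 + (-1/7500) * Real.sqrt 2 ^ 2) * h2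
  · linear_combination ((157/5000 : ℝ) + (-19/52500) * Real.sqrt 2 ^ 2 + (-1/52500) * Real.sqrt 2 ^ 4 + (1/5000) * Real.sqrt 7 ^ 2 + (-1/52500) * Real.sqrt 7 ^ 2 * Real.sqrt 2 ^ 2) * h7 + ((69/2500 : ℝ) + (1/15000) * Real.sqrt 2 ^ 2) * h2
end

section
/- With d₁ = 1/2 + √7/10 − √2/10, d₂ = 1/2 − √7/10 − √2/10, ω₁ = 1/2 + √14/84, ω₂ = 1/2 − √14/84, the middle weight ω_M = √2/6 satisfies ω₁d₁⁴ + ω₂d₂⁴ + ω_M/2 = 1/5. -/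
open Real

/-!
The nodes are `a ± b` and the weights `1/2 ± c` with `a = 1/2 - √2/10`, `b = √7/10`,
`c = √14/84`. Pairing them symmetrically leaves only even powers of `b` and the product
`b c = √2/120`, so the left-hand side becomes a polynomial in `√2` alone, which reduces to `1/5`
modulo `(√2)^2 = 2`.
-/

theorem weighted_pow_four_add_sub {K : Type*} [Field K] [CharZero K] (a b c : K) :
    (1/2 + c) * (a + b)^4 + (1/2 - c) * (a - b)^4
      = a^4 + 6 * a^2 * b^2 + b^4 + 8 * a * (b * c) * (a^2 + b^2) := by
  ring

theorem middle_weight_quartic_c0 :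
    let d1 : ℝ := 1/2 + Real.sqrt 7 / 10 - Real.sqrt 2 / 10
    let d2 : ℝ := 1/2 - Real.sqrt 7 / 10 - Real.sqrt 2 / 10
    let ω1 : ℝ := 1/2 + Real.sqrt 14 / 84
    let ω2 : ℝ := 1/2 - Real.sqrt 14 / 84
    let ωM : ℝ := Real.sqrt 2 / 6
    ω1 * d1^4 + ω2 * d2^4 + ωM / 2 = 1/5 := by
  intro d1 d2 ω1 ω2 ωM
  set s := √2
  have hs : s^2 = 2 := sq_sqrt (by norm_num)
  have h7 : √7^2 = 7 := sq_sqrt (by norm_num)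
  have hb : (√7 / 10)^2 = 7/100 := by rw [div_pow, h7]; norm_num
  have hbc : √7 / 10 * (√14 / 84) = s / 120 := by
    rw [show (14 : ℝ) = 7 * 2 by norm_num, sqrt_mul (by norm_num)]
    linear_combination s / 840 * h7
  have hsplit := weighted_pow_four_add_sub (1/2 - s/10) (√7 / 10) (√14 / 84)
  rw [hbc, show (√7 / 10)^4 = ((√7 / 10)^2)^2 by ring, hb] at hsplit
  calc ω1 * d1^4 + ω2 * d2^4 + ωM / 2
      = (1/2 + √14/84) * (1/2 - s/10 + √7/10)^4
          + (1/2 - √14/84) * (1/2 - s/10 - √7/10)^4 + s/12 := by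
        simp only [d1, d2, ω1, ω2, ωM]; ring
    _ = 1/5 := by
        rw [hsplit]
        linear_combination (69/5000 - s/1000 + s^2/30000) * hs
end

section
/- The real number d₁ = 67/98 − 3√78/98 − √(95 − 10√78)/98 is a root of the quartic polynomial 52 − 364x + 905x² − 938x³ + 343x⁴. -/
/-!
Over `ℚ(√78)` the quartic splits as a product of the two conjugate quadratics
`49x² - (67 ∓ 3√78)x + (26 ∓ 2√78)`, up to the factor `7`, and `d₁` is the smaller root
of the first one by the quadratic formula: its discriminant is `95 - 10√78`.
-/

open Real

lemma quartic_mul_seven_eq {R : Type*} [CommRing R] (x : R) :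
    7 * (52 - 364 * x + 905 * x^2 - 938 * x^3 + 343 * x^4)
      = (49 * x^2 - 67 * x + 26)^2 - 78 * (3 * x - 2)^2 := by
  ring

lemma quartic_eq_zero_of_quadratic_eq_zero {K : Type*} [Field K] [CharZero K] {a x : K}
    (ha : a^2 = 78) (hx : 49 * (x * x) + -(67 - 3 * a) * x + (26 - 2 * a) = 0) :
    52 - 364 * x + 905 * x^2 - 938 * x^3 + 343 * x^4 = 0 := by
  have hP : 49 * x^2 - 67 * x + 26 = -(a * (3 * x - 2)) := by linear_combination hx
  have h7 : 7 * (52 - 364 * x + 905 * x^2 - 938 * x^3 + 343 * x^4) = 0 := by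
    rw [quartic_mul_seven_eq, hP]
    linear_combination (3 * x - 2)^2 * ha
  exact (mul_eq_zero.mp h7).resolve_left (by norm_num)

lemma quadratic_eq_zero_at_smaller_root {a : ℝ} (ha : a^2 = 78) (hnn : 0 ≤ 95 - 10 * a) :
    let x := 67/98 - 3 * a / 98 - √(95 - 10 * a) / 98
    49 * (x * x) + -(67 - 3 * a) * x + (26 - 2 * a) = 0 := by
  have hdiscrim : discrim 49 (-(67 - 3 * a)) (26 - 2 * a)
      = √(95 - 10 * a) * √(95 - 10 * a) := by
    rw [mul_self_sqrt hnn, discrim]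
    linear_combination 9 * ha
  refine (quadratic_eq_zero_iff (by norm_num) hdiscrim _).mpr (Or.inr ?_)
  ring

theorem d1_root_of_quartic :
    let d1 : ℝ := 67/98 - 3 * Real.sqrt 78 / 98 - Real.sqrt (95 - 10 * Real.sqrt 78) / 98
    52 - 364 * d1 + 905 * d1^2 - 938 * d1^3 + 343 * d1^4 = 0 := by
  have ha : √78 ^ 2 = 78 := sq_sqrt (by norm_num)
  have hnn : 0 ≤ 95 - 10 * √78 := by nlinarith [sqrt_nonneg 78]
  exact quartic_eq_zero_of_quadratic_eq_zero ha (quadratic_eq_zero_at_smaller_root ha hnn)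
end

section
/- For the degree-6 C¹ asymptotic rule, the total weight per two-element block equals the block length: 2ω₁ + 2ω₂ + ω₃ = 2, and each weight is positive: ω₁ > 0, ω₂ > 0, ω₃ > 0, where ω₁ = 1693/4160 + 3√65/4160 − 673√30/99840 + 2047√78/299520, ω₂ = 1693/4160 + 3√65/4160 + 673√30/99840 − 2047√78/299520, ω₃ = 387/1040 − 3√65/1040. -/
open Real

/-! The irrational parts cancel in `2 ω₁ + 2 ω₂ + ω₃`. For positivity, each weight is its
rational part plus terms that are either nonnegative or tiny: the crude bounds `√30 < 6`,
`√65 < 9`, `√78 < 9` already keep the negative terms below the rational part. -/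

theorem sixtic_weights_sum_and_positive :
    let ω1 : ℝ := 1693/4160 + 3 * Real.sqrt 65 / 4160 - 673 * Real.sqrt 30 / 99840
                  + 2047 * Real.sqrt 78 / 299520
    let ω2 : ℝ := 1693/4160 + 3 * Real.sqrt 65 / 4160 + 673 * Real.sqrt 30 / 99840
                  - 2047 * Real.sqrt 78 / 299520
    let ω3 : ℝ := 387/1040 - 3 * Real.sqrt 65 / 1040
    2 * ω1 + 2 * ω2 + ω3 = 2 ∧ 0 < ω1 ∧ 0 < ω2 ∧ 0 < ω3 := by
  intro ω1 ω2 ω3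
  have sqrt30_lt : √30 < 6 := (sqrt_lt' (by norm_num)).2 (by norm_num)
  have sqrt65_lt : √65 < 9 := (sqrt_lt' (by norm_num)).2 (by norm_num)
  have sqrt78_lt : √78 < 9 := (sqrt_lt' (by norm_num)).2 (by norm_num)
  have := sqrt_nonneg 30
  have := sqrt_nonneg 65
  have := sqrt_nonneg 78
  refine ⟨by simp only [ω1, ω2, ω3]; ring, ?_, ?_, ?_⟩ <;> simp only [ω1, ω2, ω3] <;> linarith
end

section
/- The quartic polynomial 52 − 364x + 905x² − 938x³ + 343x⁴ has exactly two real roots in the interval (0,1), namely both roots are strictly between 0 and 1, and the polynomial is positive at x = 0 and at x = 1. -/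
/-!
Over `ℚ(√78)` the quartic splits into two quadratics conjugate under `√78 ↦ -√78`:
`28 p(x) = q_a(x) q_{-a}(x)` with `q_a(x) = 98x² - 2(67 - 3a)x + (52 - 4a)` and `a = √78`.
The discriminant of `q_a` is `4(95 - 10a)`, so `d₁` and `d₂` are roots of `q_{√78}` and
`q_{-√78}` respectively, and `a ≈ 8.83` places both in `(0, 1)`.
-/

open Real

lemma quartic_mul_twentyEight_eq (a x : ℝ) (ha : a ^ 2 = 78) :
    28 * (52 - 364 * x + 905 * x ^ 2 - 938 * x ^ 3 + 343 * x ^ 4) =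
      (98 * x ^ 2 - 2 * (67 - 3 * a) * x + (52 - 4 * a)) *
        (98 * x ^ 2 - 2 * (67 + 3 * a) * x + (52 + 4 * a)) := by
  linear_combination (6 * x - 4) ^ 2 * ha

lemma quadratic_factor_eq_zero (a b x : ℝ) (ha : a ^ 2 = 78) (hb : b ^ 2 = 95 - 10 * a)
    (hx : 98 * x = 67 - 3 * a - b) :
    98 * x ^ 2 - 2 * (67 - 3 * a) * x + (52 - 4 * a) = 0 := by
  linear_combination ((98 * x - 67 + 3 * a - b) / 98) * hx + (1 / 98) * hb - (9 / 98) * ha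

lemma quartic_eq_zero (a b x : ℝ) (ha : a ^ 2 = 78) (hb : b ^ 2 = 95 - 10 * a)
    (hx : 98 * x = 67 - 3 * a - b) :
    52 - 364 * x + 905 * x ^ 2 - 938 * x ^ 3 + 343 * x ^ 4 = 0 := by
  have hfactor := quartic_mul_twentyEight_eq a x ha
  rw [quadratic_factor_eq_zero a b x ha hb hx, zero_mul] at hfactor
  linarith

theorem quartic_signs_and_roots :
    let p : ℝ → ℝ := fun x => 52 - 364 * x + 905 * x^2 - 938 * x^3 + 343 * x^4
    let d1 : ℝ := 67/98 - 3 * Real.sqrt 78 / 98 - Real.sqrt (95 - 10 * Real.sqrt 78) / 98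
    let d2 : ℝ := 67/98 + 3 * Real.sqrt 78 / 98 - Real.sqrt (95 + 10 * Real.sqrt 78) / 98
    p 0 > 0 ∧ p 1 < 0 ∧ (∃ x ∈ Set.Ioo (0:ℝ) 1, p x = 0) ∧
    d1 ∈ Set.Ioo (0:ℝ) 1 ∧ d2 ∈ Set.Ioo (0:ℝ) 1 ∧ p d1 = 0 ∧ p d2 = 0 := by
  intro p d1 d2
  set a := √78
  set b := √(95 - 10 * a)
  set c := √(95 + 10 * a)
  have ha : a ^ 2 = 78 := sq_sqrt (by norm_num)
  have ha_lt : a < 9 := (sqrt_lt' (by norm_num)).2 (by norm_num)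
  have ha_gt : 44 / 5 < a := (lt_sqrt (by norm_num)).2 (by norm_num)
  have hb : b ^ 2 = 95 - 10 * a := sq_sqrt (by linarith)
  have hc : c ^ 2 = 95 + 10 * a := sq_sqrt (by linarith)
  have hb_lt : b < 3 := (sqrt_lt' (by norm_num)).2 (by linarith)
  have hc_lt : c < 14 := (sqrt_lt' (by norm_num)).2 (by linarith)
  have hd1 : 98 * d1 = 67 - 3 * a - b := by ring
  have hd2 : 98 * d2 = 67 - 3 * (-a) - c := by ring
  have hd1_mem : d1 ∈ Set.Ioo (0 : ℝ) 1 :=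
    ⟨by linarith, by linarith [sqrt_nonneg (95 - 10 * a)]⟩
  have hd2_mem : d2 ∈ Set.Ioo (0 : ℝ) 1 :=
    ⟨by linarith, by linarith [sqrt_nonneg (95 + 10 * a)]⟩
  have hpd1 : p d1 = 0 := quartic_eq_zero a b d1 ha hb hd1
  have hpd2 : p d2 = 0 :=
    quartic_eq_zero (-a) c d2 (by rw [neg_sq, ha]) (by rw [hc]; ring) hd2
  exact ⟨by norm_num [p], by norm_num [p], ⟨d1, hd1_mem, hpd1⟩, hd1_mem, hd2_mem, hpd1,
    hpd2⟩
end
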